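/- arXiv:math/9906002 — 2 statements merged into one kernel-verified Lean document; each statement's English description precedes it below -/
import Mathlib

section
/- Let X be a subgraph of the ℤ² lattice graph with no finite connected components (in particular, any everywhere percolating subgraph of ℤ² satisfies this). Then the dual configuration X* contains no circuits; consequently, for any two dual vertices x and y there is at most one self-avoiding path in X* connecting them, and any such path has length at least |x−y|₁, the L¹-distance between x and y. -/
open MeasureTheory ProbabilityTheory

/-- Vertices of the `ℤ²` lattice. -/
abbrev V2 : Type := ℤ × ℤ

/-- `L¹` distance on `ℤ²` (also used for dual vertices, in shifted coordinates). -/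
def dist1 (x y : V2) : ℕ := (x.1 - y.1).natAbs + (x.2 - y.2).natAbs

/-- Two vertices of `ℤ²` are nearest neighbors iff their `L¹` distance is `1`. -/
def latticeAdj (x y : V2) : Prop := dist1 x y = 1

/-- The edges of the `ℤ²` lattice graph, as unordered pairs of vertices. -/
def latticeEdges : Set (Sym2 V2) := {e | ∃ x y, latticeAdj x y ∧ e = s(x, y)}

/-- The graph on `ℤ²` determined by an edge configuration `Z`:
`x` and `y` are adjacent iff they are nearest neighbors and the edge `⟨x,y⟩` belongs to `Z`. -/
def graphOf (Z : Set (Sym2 V2)) : SimpleGraph V2 where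
  Adj x y := latticeAdj x y ∧ s(x, y) ∈ Z
  symm := by
    refine ⟨fun x y h => ?_⟩
    refine ⟨?_, ?_⟩
    · have := h.1; unfold latticeAdj dist1 at *; omega
    · rw [Sym2.eq_swap]; exact h.2
  loopless := by
    refine ⟨fun x h => ?_⟩
    have := h.1; unfold latticeAdj dist1 at this; omega

/-- The connected component of `x` in the configuration `Z` is infinite. -/
def compInfinite (Z : Set (Sym2 V2)) (x : V2) : Prop :=
  {y | (graphOf Z).Reachable x y}.Infinite

/-- `X` is an everywhere percolating subgraph of `ℤ²`: it is a set of lattice edges and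
every vertex lies in an infinite connected component of `X`. -/
def EverywherePercolating (X : Set (Sym2 V2)) : Prop :=
  X ⊆ latticeEdges ∧ ∀ x : V2, compInfinite X x

/-- The dual configuration `Z*`.  A dual vertex `d` stands for the point `d + (1/2, 1/2)` of the
dual lattice `ℤ² + (1/2,1/2)`.  The dual edge joining `(a, b-1)` and `(a, b)` crosses the primal
horizontal edge from `(a, b)` to `(a+1, b)`, and the dual edge joining `(a-1, b)` and `(a, b)`
crosses the primal vertical edge from `(a, b)` to `(a, b+1)`.  A dual edge is present in `Z*`
iff the primal edge crossing it is absent from `Z`. -/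
def dualConfig (Z : Set (Sym2 V2)) : Set (Sym2 V2) :=
  {e | ∃ a b : ℤ,
    (e = s(((a, b - 1) : V2), ((a, b) : V2)) ∧ s(((a, b) : V2), ((a + 1, b) : V2)) ∉ Z) ∨
    (e = s(((a - 1, b) : V2), ((a, b) : V2)) ∧ s(((a, b) : V2), ((a, b + 1) : V2)) ∉ Z)}

/-- The box `Λ(x, m) = x + [-m/2, m/2]²`, as a set of vertices of `ℤ²`. -/
def box (x : V2) (m : ℕ) : Set V2 :=
  {y | 2 * (y.1 - x.1).natAbs ≤ m ∧ 2 * (y.2 - x.2).natAbs ≤ m}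

/-- The dual vertex `d` (representing the point `d + (1/2,1/2)`) lies in the box
`Λ(x, m) = x + [-m/2, m/2]²`. -/
def dualMemBox (x : V2) (m : ℕ) (d : V2) : Prop :=
  (2 * (d.1 - x.1) + 1).natAbs ≤ m ∧ (2 * (d.2 - x.2) + 1).natAbs ≤ m

/-- `B` is a family of independent `{0,1}`-valued random variables, indexed by the (potential)
edges of `ℤ²`, each taking the value `true` with probability `p`. -/
def BernoulliFamily {Ω : Type} [MeasurableSpace Ω] (μ : Measure Ω) (p : ℝ)
    (B : Sym2 V2 → Ω → Bool) : Prop :=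
  (∀ e, Measurable (B e)) ∧
  iIndepFun B μ ∧
  ∀ e, μ {ω | B e ω = true} = ENNReal.ofReal p

/-- The configuration obtained from `X` by `ε`-Bernoulli addition, in the sample point `ω`:
an edge of `ℤ²` is present iff it is in `X` or the corresponding Bernoulli variable is `true`. -/
def addConfig {Ω : Type} (X : Set (Sym2 V2)) (B : Sym2 V2 → Ω → Bool) (ω : Ω) :
    Set (Sym2 V2) :=
  X ∪ {e ∈ latticeEdges | B e ω = true}

/-- The vertex `n • x` of `ℤ²`. -/
def scale (n : ℕ) (x : V2) : V2 := ((n : ℤ) * x.1, (n : ℤ) * x.2)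

/-- `nx` and `ny` are closely connected in the configuration `Z`: there is a path in `Z` from
`nx` to `ny` inside `Λ(nx, n) ∪ Λ(ny, n)`. -/
def CloselyConnected (Z : Set (Sym2 V2)) (n : ℕ) (x y : V2) : Prop :=
  ∃ w : (graphOf Z).Walk (scale n x) (scale n y),
    ∀ v ∈ w.support, v ∈ box (scale n x) n ∪ box (scale n y) n

/-- The renormalized configuration `Z̃ₙ`: the edge `⟨x,y⟩` of `ℤ²` is present iff `nx` and `ny`
are closely connected in `Z`. -/
def renorm (Z : Set (Sym2 V2)) (n : ℕ) : Set (Sym2 V2) :=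
  {e | ∃ x y : V2, latticeAdj x y ∧ e = s(x, y) ∧ CloselyConnected Z n x y}

/-!
For a closed walk `C` in the dual lattice and a vertex `v` of `ℤ²`, let `crossParity C v` be the
parity of the number of crossings of `C` with the horizontal ray from `v` to the right. Moving `v`
to a neighbour changes this parity by the number of times `C` uses the dual edge crossing the
primal edge between them; for a closed walk in `X*` and an edge of `X` that number is zero, so
`crossParity C` is constant on the components of `X`. It vanishes outside a bounding box of `C`.
A circuit of `X*` uses some dual edge exactly once, so one endpoint of the primal edge it crosses
has parity one, and its component of `X` lies in the bounding box, so it is finite.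
-/

lemma ZMod.eq_one_or_eq_one_of_add_eq_one {a b : ZMod 2} (h : a + b = 1) : a = 1 ∨ b = 1 := by
  revert a b; decide

lemma mem_of_mem_edgeSet_graphOf {Z : Set (Sym2 V2)} {e : Sym2 V2}
    (h : e ∈ (graphOf Z).edgeSet) : e ∈ Z := by
  induction e using Sym2.ind with
  | _ x y => exact h.2

lemma count_edges_eq_zero_of_notMem {Z : Set (Sym2 V2)} {u u' : V2} (w : (graphOf Z).Walk u u')
    {e : Sym2 V2} (he : e ∉ Z) : w.edges.count e = 0 :=
  List.count_eq_zero.mpr fun hm => he (mem_of_mem_edgeSet_graphOf (w.edges_subset_edgeSet hm))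

/-- `rayCross d d' v = 1` iff the dual edge from `d` to `d'` crosses the ray
`{(t, v.2) | t ≥ v.1}`: since `d` stands for `d + (1/2, 1/2)`, these are the vertical dual edges
in a column `a ≥ v.1` joining rows `v.2 - 1` and `v.2`. -/
def rayCross (d d' v : V2) : ZMod 2 :=
  if d.1 = d'.1 ∧ v.1 ≤ d.1 ∧ ((d.2 = v.2 - 1 ∧ d'.2 = v.2) ∨ (d'.2 = v.2 - 1 ∧ d.2 = v.2))
  then 1 else 0

def halfRowIndicator (p q : ℤ) (d : V2) : ZMod 2 := if d.2 = q ∧ p ≤ d.1 then 1 else 0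

def upperHalfIndicator (q : ℤ) (d : V2) : ZMod 2 := if q ≤ d.2 then 1 else 0

section RayCross

variable (d d' : V2) (p q : ℤ)

lemma rayCross_add_rayCross_right :
    rayCross d d' (p, q) + rayCross d d' (p + 1, q)
      = if s(d, d') = s(((p, q - 1) : V2), ((p, q) : V2)) then 1 else 0 := by
  simp only [rayCross, Sym2.eq_iff, Prod.ext_iff]
  split_ifs <;> first | decide | (exfalso; omega)

/-- The rays from `(p, q)` and `(p, q + 1)` together with the primal edge between these points
bound the region of dual vertices indicated by `halfRowIndicator p q`. -/
lemma rayCross_add_rayCross_up (hadj : latticeAdj d d') :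
    rayCross d d' (p, q) + rayCross d d' (p, q + 1)
      + (if s(d, d') = s(((p - 1, q) : V2), ((p, q) : V2)) then 1 else 0)
      = halfRowIndicator p q d + halfRowIndicator p q d' := by
  unfold latticeAdj dist1 at hadj
  simp only [rayCross, halfRowIndicator, Sym2.eq_iff, Prod.ext_iff]
  split_ifs <;> first | decide | (exfalso; omega)

lemma rayCross_eq_of_le_fst (hadj : latticeAdj d d') (h : p ≤ d.1) :
    rayCross d d' (p, q) = upperHalfIndicator q d + upperHalfIndicator q d' := by
  unfold latticeAdj dist1 at hadj
  simp only [rayCross, upperHalfIndicator]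
  split_ifs <;> first | decide | (exfalso; omega)

end RayCross

lemma rayCross_eq_zero_of_fst_lt {d d' v : V2} (h : d.1 < v.1) : rayCross d d' v = 0 :=
  if_neg fun hc => by omega

lemma rayCross_eq_zero_of_snd_ne {d d' v : V2} (h : d.2 ≠ v.2) (h' : d'.2 ≠ v.2) :
    rayCross d d' v = 0 :=
  if_neg fun hc => by omega

def crossParity {Z : Set (Sym2 V2)} {u u' : V2} (w : (graphOf Z).Walk u u') (v : V2) : ZMod 2 :=
  (w.darts.map fun e => rayCross e.fst e.snd v).sum

section CrossParity

variable {Z : Set (Sym2 V2)}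

@[simp]
lemma crossParity_nil {u : V2} (v : V2) :
    crossParity (SimpleGraph.Walk.nil : (graphOf Z).Walk u u) v = 0 := rfl

@[simp]
lemma crossParity_cons {u d u' : V2} (h : (graphOf Z).Adj u d) (w : (graphOf Z).Walk d u')
    (v : V2) : crossParity (SimpleGraph.Walk.cons h w) v = rayCross u d v + crossParity w v := by
  simp [crossParity]

variable {u u' : V2} (w : (graphOf Z).Walk u u') (p q : ℤ)

lemma crossParity_add_crossParity_right :
    crossParity w (p, q) + crossParity w (p + 1, q)
      = (w.edges.count s(((p, q - 1) : V2), ((p, q) : V2)) : ZMod 2) := by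
  induction w with
  | nil => simp
  | @cons a d b h w ih =>
    simp only [crossParity_cons, SimpleGraph.Walk.edges_cons, List.count_cons, beq_iff_eq,
      Nat.cast_add, Nat.cast_ite, Nat.cast_one, Nat.cast_zero]
    linear_combination rayCross_add_rayCross_right a d p q + ih

lemma crossParity_add_crossParity_up :
    crossParity w (p, q) + crossParity w (p, q + 1)
      = halfRowIndicator p q u + halfRowIndicator p q u'
        + (w.edges.count s(((p - 1, q) : V2), ((p, q) : V2)) : ZMod 2) := by
  induction w with
  | nil => simp [CharTwo.add_self_eq_zero]
  | @cons a d b h w ih =>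
    simp only [crossParity_cons, SimpleGraph.Walk.edges_cons, List.count_cons, beq_iff_eq,
      Nat.cast_add, Nat.cast_ite, Nat.cast_one, Nat.cast_zero]
    linear_combination rayCross_add_rayCross_up a d p q h.1 + ih
      + CharTwo.add_self_eq_zero (halfRowIndicator p q d)
      - CharTwo.add_self_eq_zero
        (if s(a, d) = s(((p - 1, q) : V2), ((p, q) : V2)) then (1 : ZMod 2) else 0)

lemma crossParity_eq_of_forall_le_fst (hw : ∀ d ∈ w.support, p ≤ d.1) :
    crossParity w (p, q) = upperHalfIndicator q u + upperHalfIndicator q u' := by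
  induction w with
  | nil => simp [CharTwo.add_self_eq_zero]
  | @cons a d b h w ih =>
    rw [crossParity_cons, ih fun x hx => hw x (by simp [hx]),
      rayCross_eq_of_le_fst a d p q h.1 (hw a (by simp))]
    linear_combination CharTwo.add_self_eq_zero (upperHalfIndicator q d)

lemma crossParity_eq_zero_of_forall_fst_lt {v : V2} (hw : ∀ d ∈ w.support, d.1 < v.1) :
    crossParity w v = 0 := by
  induction w with
  | nil => rfl
  | @cons a d b h w ih =>
    rw [crossParity_cons, ih fun x hx => hw x (by simp [hx]),
      rayCross_eq_zero_of_fst_lt (hw a (by simp)), add_zero]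

lemma crossParity_eq_zero_of_forall_snd_ne {v : V2} (hw : ∀ d ∈ w.support, d.2 ≠ v.2) :
    crossParity w v = 0 := by
  induction w with
  | nil => rfl
  | @cons a d b h w ih =>
    rw [crossParity_cons, ih fun x hx => hw x (by simp [hx]),
      rayCross_eq_zero_of_snd_ne (hw a (by simp)) (hw d (by simp)), add_zero]

end CrossParity

lemma finite_setOf_crossParity_eq_one {Z : Set (Sym2 V2)} {u : V2} (C : (graphOf Z).Walk u u) :
    {v | crossParity C v = 1}.Finite := by
  set s := {d | d ∈ C.support}
  have hs : s.Finite := C.support.finite_toSet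
  refine ((hs.biUnion fun d _ => hs.biUnion fun d' _ => Set.finite_Ioc d.1 d'.1).prod
    (hs.image Prod.snd)).subset fun v hv => ?_
  have hv : crossParity C v ≠ 0 := by rw [show crossParity C v = 1 from hv]; decide
  obtain ⟨d, hd, hdv⟩ : ∃ d ∈ C.support, d.1 < v.1 := by
    by_contra! h
    refine hv ?_
    rw [← Prod.mk.eta (p := v), crossParity_eq_of_forall_le_fst C _ _ h,
      CharTwo.add_self_eq_zero]
  obtain ⟨d', hd', hvd'⟩ : ∃ d' ∈ C.support, v.1 ≤ d'.1 := by
    by_contra! h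
    exact hv (crossParity_eq_zero_of_forall_fst_lt C h)
  obtain ⟨d'', hd'', hd''v⟩ : ∃ d'' ∈ C.support, d''.2 = v.2 := by
    by_contra! h
    exact hv (crossParity_eq_zero_of_forall_snd_ne C h)
  exact ⟨Set.mem_biUnion hd (Set.mem_biUnion hd' ⟨hdv, hvd'⟩), d'', hd'', hd''v⟩

section DualConfig

variable {X : Set (Sym2 V2)} (p q : ℤ)

lemma notMem_dualConfig_of_right_mem (h : s(((p, q) : V2), ((p + 1, q) : V2)) ∈ X) :
    s(((p, q - 1) : V2), ((p, q) : V2)) ∉ dualConfig X := by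
  rintro ⟨a, b, ⟨he, hn⟩ | ⟨he, hn⟩⟩ <;> simp only [Sym2.eq_iff, Prod.ext_iff] at he
  · obtain ⟨rfl, rfl⟩ : a = p ∧ b = q := by omega
    exact hn h
  · omega

lemma notMem_dualConfig_of_up_mem (h : s(((p, q) : V2), ((p, q + 1) : V2)) ∈ X) :
    s(((p - 1, q) : V2), ((p, q) : V2)) ∉ dualConfig X := by
  rintro ⟨a, b, ⟨he, hn⟩ | ⟨he, hn⟩⟩ <;> simp only [Sym2.eq_iff, Prod.ext_iff] at he
  · omega
  · obtain ⟨rfl, rfl⟩ : a = p ∧ b = q := by omega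
    exact hn h

variable {u u' : V2}

lemma crossParity_right_eq (h : s(((p, q) : V2), ((p + 1, q) : V2)) ∈ X)
    (w : (graphOf (dualConfig X)).Walk u u') :
    crossParity w (p, q) = crossParity w (p + 1, q) := by
  have hsum := crossParity_add_crossParity_right w p q
  rwa [count_edges_eq_zero_of_notMem w (notMem_dualConfig_of_right_mem p q h), Nat.cast_zero,
    CharTwo.add_eq_zero] at hsum

lemma crossParity_up_eq (h : s(((p, q) : V2), ((p, q + 1) : V2)) ∈ X)
    (C : (graphOf (dualConfig X)).Walk u u) :
    crossParity C (p, q) = crossParity C (p, q + 1) := by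
  have hsum := crossParity_add_crossParity_up C p q
  rwa [count_edges_eq_zero_of_notMem C (notMem_dualConfig_of_up_mem p q h), Nat.cast_zero,
    add_zero, CharTwo.add_self_eq_zero, CharTwo.add_eq_zero] at hsum

lemma crossParity_eq_of_adj {x y : V2} (hxy : (graphOf X).Adj x y)
    (C : (graphOf (dualConfig X)).Walk u u) : crossParity C x = crossParity C y := by
  obtain ⟨x1, x2⟩ := x
  obtain ⟨y1, y2⟩ := y
  obtain ⟨hadj, hmem⟩ := hxy
  unfold latticeAdj dist1 at hadj
  obtain ⟨rfl, rfl⟩ | ⟨rfl, rfl⟩ | ⟨rfl, rfl⟩ | ⟨rfl, rfl⟩ :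
      (y1 = x1 + 1 ∧ y2 = x2) ∨ (x1 = y1 + 1 ∧ x2 = y2) ∨
      (y1 = x1 ∧ y2 = x2 + 1) ∨ (x1 = y1 ∧ x2 = y2 + 1) := by omega
  · exact crossParity_right_eq _ _ hmem C
  · exact (crossParity_right_eq _ _ (Sym2.eq_swap ▸ hmem) C).symm
  · exact crossParity_up_eq _ _ hmem C
  · exact (crossParity_up_eq _ _ (Sym2.eq_swap ▸ hmem) C).symm

lemma crossParity_eq_of_reachable {x y : V2} (hxy : (graphOf X).Reachable x y)
    (C : (graphOf (dualConfig X)).Walk u u) : crossParity C x = crossParity C y := by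
  obtain ⟨w⟩ := hxy
  induction w with
  | nil => rfl
  | cons h _ ih => exact (crossParity_eq_of_adj h C).trans ih

lemma SimpleGraph.Walk.IsCycle.exists_crossParity_eq_one {C : (graphOf (dualConfig X)).Walk u u}
    (hC : C.IsCycle) : ∃ v, crossParity C v = 1 := by
  obtain ⟨e, he⟩ := List.exists_mem_of_ne_nil _ (SimpleGraph.Walk.edges_eq_nil.not.mpr hC.not_nil)
  have hcount : (C.edges.count e : ZMod 2) = 1 := by
    rw [List.count_eq_one_of_mem hC.edges_nodup he, Nat.cast_one]
  obtain ⟨a, b, ⟨rfl, -⟩ | ⟨rfl, -⟩⟩ := mem_of_mem_edgeSet_graphOf (C.edges_subset_edgeSet he)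
  · have hsum := crossParity_add_crossParity_right C a b
    rw [hcount] at hsum
    exact (ZMod.eq_one_or_eq_one_of_add_eq_one hsum).elim (⟨_, ·⟩) (⟨_, ·⟩)
  · have hsum := crossParity_add_crossParity_up C a b
    rw [hcount, CharTwo.add_self_eq_zero, zero_add] at hsum
    exact (ZMod.eq_one_or_eq_one_of_add_eq_one hsum).elim (⟨_, ·⟩) (⟨_, ·⟩)

lemma isAcyclic_graphOf_dualConfig
    (hcomp : ∀ x : V2, {y | (graphOf X).Reachable x y}.Infinite) :
    (graphOf (dualConfig X)).IsAcyclic := by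
  intro u C hC
  obtain ⟨v, hv⟩ := hC.exists_crossParity_eq_one
  refine hcomp v ((finite_setOf_crossParity_eq_one C).subset fun y hy => ?_)
  show crossParity C y = 1
  rwa [← crossParity_eq_of_reachable hy C]

end DualConfig

lemma dist1_le_length {Z : Set (Sym2 V2)} {x y : V2} (w : (graphOf Z).Walk x y) :
    dist1 x y ≤ w.length := by
  induction w with
  | nil => simp [dist1]
  | cons h _ ih =>
    have hadj := h.1
    unfold latticeAdj at hadj
    unfold dist1 at hadj ih ⊢
    rw [SimpleGraph.Walk.length_cons]
    omega

theorem no_circuits_in_dual_general (X : Set (Sym2 V2))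
    (hcomp : ∀ x : V2, {y | (graphOf X).Reachable x y}.Infinite) :
    (graphOf (dualConfig X)).IsAcyclic ∧
    (∀ x y : V2, ∀ p q : (graphOf (dualConfig X)).Path x y, p = q) ∧
    (∀ x y : V2, ∀ p : (graphOf (dualConfig X)).Path x y, dist1 x y ≤ p.1.length) := by
  have hacyclic := isAcyclic_graphOf_dualConfig hcomp
  exact ⟨hacyclic, fun x y => (SimpleGraph.isAcyclic_iff_subsingleton_path.mp hacyclic x y).elim,
    fun _ _ p => dist1_le_length p.1⟩

/-- If `X` is a subgraph of `ℤ²` with no finite connected components (in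
particular, this holds for every everywhere percolating subgraph), then the dual configuration
`X*` contains no circuits; consequently, between any two dual vertices there is at most one
self-avoiding path in `X*`, and every such path has length at least the `L¹`-distance between
its endpoints. -/
theorem no_circuits_in_dual (X : Set (Sym2 V2)) (hX : X ⊆ latticeEdges)
    (hcomp : ∀ x : V2, {y | (graphOf X).Reachable x y}.Infinite) :
    (graphOf (dualConfig X)).IsAcyclic ∧
    (∀ x y : V2, ∀ p q : (graphOf (dualConfig X)).Path x y, p = q) ∧
    (∀ x y : V2, ∀ p : (graphOf (dualConfig X)).Path x y, dist1 x y ≤ p.1.length) :=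
  no_circuits_in_dual_general X hcomp
end

section
/- Let Z be a subgraph of the ℤ² lattice graph such that the dual configuration Z* contains no circuits and every connected component of Z* is finite (i.e., Z* is a forest of finite trees). Then Z is a connected subgraph of ℤ². -/
open MeasureTheory ProbabilityTheory

/-!
If `Z` were disconnected, let `C` be the vertex set of one of its components. The dual edges
crossing the edge boundary of `C` all lie in `Z*` and there is at least one of them. In the graph
they form, no vertex has degree one, since the boundary of each unit square meets the edge
boundary of `C` an even number of times. But a finite tree with an edge has a leaf.
-/

namespace SimpleGraph

variable {V : Type*} {G : SimpleGraph V}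

theorem Reachable.exists_isPath_penultimate_eq_of_dist_lt {u v w : V} (hadj : G.Adj v w)
    (hw : G.Reachable u w) (hdist : G.dist u w < G.dist u v) :
    ∃ p : G.Walk u v, p.IsPath ∧ p.penultimate = w := by
  classical
  obtain ⟨q, hq, hlen⟩ := hw.exists_path_of_dist
  have hv : v ∉ q.support := fun hv => by
    have := dist_le (q.takeUntil v hv)
    have := q.length_takeUntil_le_length hv
    omega
  exact ⟨q.concat hadj.symm, hq.concat hv hadj.symm, q.penultimate_concat _⟩

theorem IsAcyclic.eq_of_adj_of_dist_lt (hG : G.IsAcyclic) {u v w₁ w₂ : V}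
    (h₁ : G.Adj v w₁) (h₂ : G.Adj v w₂) (hr₁ : G.Reachable u w₁) (hr₂ : G.Reachable u w₂)
    (hd₁ : G.dist u w₁ < G.dist u v) (hd₂ : G.dist u w₂ < G.dist u v) : w₁ = w₂ := by
  obtain ⟨p₁, hp₁, rfl⟩ := hr₁.exists_isPath_penultimate_eq_of_dist_lt h₁ hd₁
  obtain ⟨p₂, hp₂, rfl⟩ := hr₂.exists_isPath_penultimate_eq_of_dist_lt h₂ hd₂
  have hp : p₁ = p₂ := congrArg Subtype.val ((hG.subsingleton_path u v).elim ⟨p₁, hp₁⟩ ⟨p₂, hp₂⟩)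
  rw [hp]

/-- A vertex farthest from `u` is a leaf. -/
theorem IsAcyclic.exists_reachable_existsUnique_adj (hG : G.IsAcyclic) {u w : V}
    (hadj : G.Adj u w) (hfin : {v | G.Reachable u v}.Finite) :
    ∃ v, G.Reachable u v ∧ ∃! w, G.Adj v w := by
  obtain ⟨v, huv, hmax⟩ := hfin.exists_maximalFor (G.dist u) _ ⟨u, Reachable.refl u⟩
  have hfar : ∀ w, G.Adj v w → G.dist u w < G.dist u v := fun w hw =>
    lt_of_le_of_ne (le_of_not_gt fun hlt => hlt.not_ge (hmax (huv.trans hw.reachable) hlt.le))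
      (hG.dist_ne_of_adj hw huv).symm
  have p : G.Walk u v := huv.some
  have hnil : ¬ p.Nil := fun hnil => by
    obtain rfl := hnil.eq
    simpa using hfar w hadj
  have hpen : G.Adj v p.penultimate := (p.adj_penultimate hnil).symm
  exact ⟨v, huv, p.penultimate, hpen, fun w' hw' => hG.eq_of_adj_of_dist_lt hw' hpen
    (huv.trans hw'.reachable) (huv.trans hpen.reachable) (hfar _ hw') (hfar _ hpen)⟩

end SimpleGraph

open SimpleGraph

theorem latticeAdj_iff_hasse_boxProd_adj {x y : V2} :
    latticeAdj x y ↔ (hasse ℤ □ hasse ℤ).Adj x y := by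
  simp only [latticeAdj, dist1, boxProd_adj, hasse_adj, Order.covBy_iff_add_one_eq]
  omega

theorem exists_latticeAdj_mem_notMem {C : Set V2} {x y : V2} (hx : x ∈ C) (hy : y ∉ C) :
    ∃ u v, latticeAdj u v ∧ u ∈ C ∧ v ∉ C := by
  have hℤ : (hasse ℤ).Connected := Connected.mk (hasse_preconnected_of_succ ℤ)
  have hconn : (hasse ℤ □ hasse ℤ).Connected := hℤ.boxProd hℤ
  obtain ⟨d, -, hd, hd'⟩ := (hconn x y).some.exists_boundary_dart C hx hy
  exact ⟨d.fst, d.snd, latticeAdj_iff_hasse_boxProd_adj.2 d.adj, hd, hd'⟩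

/-- The dual edges crossing a primal edge with exactly one endpoint in `C`, encoded as in
`dualConfig`. -/
def dualBoundary (C : Set V2) : Set (Sym2 V2) :=
  {e | ∃ a b : ℤ,
    (e = s(((a, b - 1) : V2), ((a, b) : V2)) ∧ ¬((a, b) ∈ C ↔ (a + 1, b) ∈ C)) ∨
    (e = s(((a - 1, b) : V2), ((a, b) : V2)) ∧ ¬((a, b) ∈ C ↔ (a, b + 1) ∈ C))}

theorem graphOf_dualBoundary_adj {C : Set V2} {α β : ℤ} {d : V2} :
    (graphOf (dualBoundary C)).Adj (α, β) d ↔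
      (d = (α, β - 1) ∧ ¬((α, β) ∈ C ↔ (α + 1, β) ∈ C)) ∨
      (d = (α, β + 1) ∧ ¬((α, β + 1) ∈ C ↔ (α + 1, β + 1) ∈ C)) ∨
      (d = (α - 1, β) ∧ ¬((α, β) ∈ C ↔ (α, β + 1) ∈ C)) ∨
      (d = (α + 1, β) ∧ ¬((α + 1, β) ∈ C ↔ (α + 1, β + 1) ∈ C)) := by
  constructor
  · rintro ⟨-, a, b, ⟨he, hC⟩ | ⟨he, hC⟩⟩ <;>
      obtain ⟨⟨⟩, rfl⟩ | ⟨⟨⟩, rfl⟩ := Sym2.eq_iff.1 he <;> simp_all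
  · rintro (⟨rfl, hC⟩ | ⟨rfl, hC⟩ | ⟨rfl, hC⟩ | ⟨rfl, hC⟩)
    · exact ⟨by simp [latticeAdj, dist1], α, β, .inl ⟨Sym2.eq_swap, hC⟩⟩
    · exact ⟨by simp [latticeAdj, dist1], α, β + 1, .inl ⟨by simp, hC⟩⟩
    · exact ⟨by simp [latticeAdj, dist1], α, β, .inr ⟨Sym2.eq_swap, hC⟩⟩
    · exact ⟨by simp [latticeAdj, dist1], α + 1, β, .inr ⟨by simp, hC⟩⟩

theorem graphOf_dualBoundary_le_graphOf_dualConfig {Z : Set (Sym2 V2)} {C : Set V2}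
    (hC : ∀ u v, (graphOf Z).Adj u v → (u ∈ C ↔ v ∈ C)) :
    graphOf (dualBoundary C) ≤ graphOf (dualConfig Z) := by
  rintro d d' ⟨hdd', a, b, ⟨he, hab⟩ | ⟨he, hab⟩⟩
  · exact ⟨hdd', a, b, .inl ⟨he, fun hZ => hab (hC _ _ ⟨by simp [latticeAdj, dist1], hZ⟩)⟩⟩
  · exact ⟨hdd', a, b, .inr ⟨he, fun hZ => hab (hC _ _ ⟨by simp [latticeAdj, dist1], hZ⟩)⟩⟩

/-- The four primal edges crossed by the dual edges at `d` bound the unit square around `d`, and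
a closed curve crosses the boundary of `C` an even number of times. -/
theorem exists_ne_graphOf_dualBoundary_adj {C : Set V2} {d d' : V2}
    (h : (graphOf (dualBoundary C)).Adj d d') :
    ∃ d'', (graphOf (dualBoundary C)).Adj d d'' ∧ d'' ≠ d' := by
  obtain ⟨α, β⟩ := d
  by_contra! hne
  simp only [graphOf_dualBoundary_adj, or_imp, and_imp, forall_and, forall_eq] at hne h
  rcases h with ⟨rfl, h⟩ | ⟨rfl, h⟩ | ⟨rfl, h⟩ | ⟨rfl, h⟩ <;>
    simp only [Prod.mk.injEq] at hne <;> grind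

theorem exists_graphOf_dualBoundary_adj {C : Set V2} {u v : V2} (huv : latticeAdj u v)
    (hu : u ∈ C) (hv : v ∉ C) : ∃ d d', (graphOf (dualBoundary C)).Adj d d' := by
  obtain ⟨a, b⟩ := u
  have hv' : v = (a + 1, b) ∨ v = (a - 1, b) ∨ v = (a, b + 1) ∨ v = (a, b - 1) := by
    simp only [latticeAdj, dist1, Prod.ext_iff] at huv ⊢
    omega
  rcases hv' with rfl | rfl | rfl | rfl
  · exact ⟨(a, b), _, graphOf_dualBoundary_adj.2 (.inl ⟨rfl, by tauto⟩)⟩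
  · exact ⟨(a - 1, b), _, graphOf_dualBoundary_adj.2 (.inl ⟨rfl, by simp; tauto⟩)⟩
  · exact ⟨(a, b), _, graphOf_dualBoundary_adj.2 (.inr (.inr (.inl ⟨rfl, by tauto⟩)))⟩
  · exact ⟨(a, b - 1), _,
      graphOf_dualBoundary_adj.2 (.inr (.inr (.inl ⟨rfl, by simp; tauto⟩)))⟩

theorem connected_of_dual_forest_of_finite_trees_general (Z : Set (Sym2 V2))
    (hacyclic : (graphOf (dualConfig Z)).IsAcyclic)
    (hfin : ∀ d : V2, {d' | (graphOf (dualConfig Z)).Reachable d d'}.Finite) :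
    (graphOf Z).Connected := by
  refine (connected_iff _).2 ⟨fun x y => ?_, ⟨(0, 0)⟩⟩
  by_contra hxy
  set C : Set V2 := {v | (graphOf Z).Reachable x v}
  have hle : graphOf (dualBoundary C) ≤ graphOf (dualConfig Z) :=
    graphOf_dualBoundary_le_graphOf_dualConfig fun u v huv =>
      ⟨fun hu => hu.trans huv.reachable, fun hv => hv.trans huv.symm.reachable⟩
  obtain ⟨u, v, huv, hu, hv⟩ := exists_latticeAdj_mem_notMem (C := C) (Reachable.refl x) hxy
  obtain ⟨d, d', hdd'⟩ := exists_graphOf_dualBoundary_adj huv hu hv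
  obtain ⟨e, -, e', he', hunique⟩ := (hacyclic.anti hle).exists_reachable_existsUnique_adj hdd'
    ((hfin d).subset fun _ h => h.mono hle)
  obtain ⟨e'', he'', hne⟩ := exists_ne_graphOf_dualBoundary_adj he'
  exact hne (hunique e'' he'')

/-- If the dual configuration `Z*` of a subgraph `Z` of `ℤ²` contains no
circuits and all its connected components are finite (i.e. `Z*` is a forest of finite trees),
then `Z` is a connected subgraph of `ℤ²`. -/
theorem connected_of_dual_forest_of_finite_trees (Z : Set (Sym2 V2)) (hZ : Z ⊆ latticeEdges)
    (hacyclic : (graphOf (dualConfig Z)).IsAcyclic)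
    (hfin : ∀ d : V2, {d' | (graphOf (dualConfig Z)).Reachable d d'}.Finite) :
    (graphOf Z).Connected :=
  connected_of_dual_forest_of_finite_trees_general Z hacyclic hfin
end
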